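/- arXiv:2312.14256 — 2 statements merged into one kernel-verified Lean document; each statement's English description precedes it below -/
import Mathlib

section
/- Let F be a voting method whose domain is the set of all profiles with two or three alternatives. If F satisfies anonymity, neutrality, weak positive responsiveness, near immunity to spoilers, homogeneity, and block preservation, then F is Condorcet consistent on three-alternative profiles: for any three-alternative profile P in which some alternative c has a positive margin over every other alternative (a Condorcet winner), F(P) = {c}. -/
/-!
Formalization of notions from "An extension of May's Theorem to three
alternatives: axiomatizing Minimax voting" by Holliday and Pacuit.

The set of voters is the countably infinite set `ℕ`; the set `α` of
alternatives is a type (assumed to have at least three elements where the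
paper assumes `|𝒳| ≥ 3`).
-/

namespace MayMinimax

/-- A profile: a finite set of voters drawn from the countably infinite set `ℕ`
of all voters, a finite set of alternatives, and, for each voter, a binary
relation on alternatives given as a Boolean-valued function:
`P.rel i a b = true` means that voter `i` ranks `a` above `b`. -/
structure Profile (α : Type*) where
  voters : Finset ℕ
  alts : Finset α
  rel : ℕ → α → α → Bool

variable {α : Type*} [DecidableEq α]

/-- Each voter's ballot is a strict weak order (asymmetric and negatively
transitive) on the alternatives. -/
def IsSWO (P : Profile α) : Prop :=
  ∀ i ∈ P.voters,
    (∀ a ∈ P.alts, ∀ b ∈ P.alts, P.rel i a b = true → P.rel i b a = false) ∧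
    (∀ a ∈ P.alts, ∀ b ∈ P.alts, ∀ c ∈ P.alts,
      P.rel i a b = false → P.rel i b c = false → P.rel i a c = false)

/-- The margin of `a` over `b` in `P`: the number of voters ranking `a` above
`b` minus the number of voters ranking `b` above `a`. -/
def Margin (P : Profile α) (a b : α) : ℤ :=
  ((P.voters.filter fun i => P.rel i a b = true).card : ℤ) -
    ((P.voters.filter fun i => P.rel i b a = true).card : ℤ)

/-- The number of voters ranking `a` above `b` in `P`. -/
def Support (P : Profile α) (a b : α) : ℕ :=
  (P.voters.filter fun i => P.rel i a b = true).card

/-- The Minimax score of `a`: the maximum margin of any other alternative over `a`. -/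
def MMScore (P : Profile α) (a : α) : ℤ :=
  (((P.alts.erase a).image fun b => Margin P b a).max).unbotD 0

/-- The set of Minimax winners: alternatives with minimal Minimax score. -/
def Minimax (P : Profile α) : Finset α :=
  P.alts.filter fun a => ∀ b ∈ P.alts, MMScore P a ≤ MMScore P b

/-- Restriction of a profile to a subset `Y` of the alternatives. -/
def Profile.restrict (P : Profile α) (Y : Finset α) : Profile α where
  voters := P.voters
  alts := Y
  rel := fun i a b => P.rel i a b && decide (a ∈ Y) && decide (b ∈ Y)

/-- `P.minus b` is `P` restricted to `X(P) \ {b}`. -/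
def Profile.minus (P : Profile α) (b : α) : Profile α :=
  P.restrict (P.alts.erase b)

/-- The combination `P + Q` of two profiles (used with disjoint voter sets and
the same set of alternatives). -/
def Profile.combine (P Q : Profile α) : Profile α where
  voters := P.voters ∪ Q.voters
  alts := P.alts
  rel := fun i a b => if i ∈ P.voters then P.rel i a b else Q.rel i a b

/-- `2P`: the profile `P` together with a copy of `P` on a disjoint set of voters. -/
def Profile.double (P : Profile α) : Profile α where
  voters := P.voters ∪ P.voters.image fun i => i + (P.voters.sup id + 1)
  alts := P.alts
  rel := fun i a b =>
    if i ∈ P.voters then P.rel i a b else P.rel (i - (P.voters.sup id + 1)) a b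

/-- `r` is (the strict part of) a linear order on the finite set `X`. -/
def IsLinearOn (r : α → α → Bool) (X : Finset α) : Prop :=
  (∀ a ∈ X, r a a = false) ∧
  (∀ a ∈ X, ∀ b ∈ X, ∀ c ∈ X, r a b = true → r b c = true → r a c = true) ∧
  (∀ a ∈ X, ∀ b ∈ X, a ≠ b → (r a b = true ∨ r b a = true)) ∧
  (∀ a ∈ X, ∀ b ∈ X, r a b = true → r b a = false)

/-- `Q` is a block profile for the set `X` of alternatives: it contains, for
each linear order of `X`, exactly one voter submitting that linear order, and
no other voters. -/
def IsBlock (X : Finset α) (Q : Profile α) : Prop :=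
  Q.alts = X ∧
  (∀ i ∈ Q.voters, IsLinearOn (Q.rel i) X) ∧
  (∀ r : α → α → Bool, IsLinearOn r X →
    ∃! i, i ∈ Q.voters ∧ ∀ a ∈ X, ∀ b ∈ X, Q.rel i a b = r a b)

/-- `P'` is obtained from `P` by one voter who ranked `a` uniquely last in `P`
switching to ranking `a` uniquely first in `P'`, with the restriction of that
voter's relation to `X(P) \ {a}` unchanged and all other voters' relations
unchanged. -/
def MoveLastToFirst (P P' : Profile α) (a : α) : Prop :=
  P'.voters = P.voters ∧ P'.alts = P.alts ∧ a ∈ P.alts ∧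
  ∃ i ∈ P.voters,
    (∀ b ∈ P.alts, b ≠ a → P.rel i b a = true) ∧
    (∀ b ∈ P.alts, b ≠ a → P'.rel i a b = true) ∧
    (∀ b ∈ P.alts, b ≠ a → ∀ c ∈ P.alts, c ≠ a → P'.rel i b c = P.rel i b c) ∧
    (∀ j ∈ P.voters, j ≠ i → ∀ x ∈ P.alts, ∀ y ∈ P.alts, P'.rel j x y = P.rel j x y)

/-- `P'` is obtained from `P` by adding one new voter who ranks `a` uniquely
first, all old voters' relations being unchanged. -/
def AddTopVoter (P P' : Profile α) (a : α) : Prop :=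
  P'.alts = P.alts ∧
  ∃ j, j ∉ P.voters ∧ P'.voters = insert j P.voters ∧
    (∀ b ∈ P.alts, b ≠ a → P'.rel j a b = true) ∧
    (∀ i ∈ P.voters, ∀ x ∈ P.alts, ∀ y ∈ P.alts, P'.rel i x y = P.rel i x y)

/-- `P'` is obtained from `P` by one voter improving the position of `a` in
their ballot, while nothing else changes. -/
def ImproveFor (P P' : Profile α) (a : α) : Prop :=
  P'.voters = P.voters ∧ P'.alts = P.alts ∧
  ∃ i ∈ P.voters,
    (∃ b ∈ P.alts, b ≠ a ∧
      ((P.rel i a b = false ∧ P'.rel i a b = true) ∨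
        (P.rel i b a = true ∧ P'.rel i b a = false))) ∧
    (∀ c ∈ P.alts, c ≠ a →
      (P.rel i a c = true → P'.rel i a c = true) ∧
      (P.rel i c a = false → P'.rel i c a = false)) ∧
    (∀ c ∈ P.alts, c ≠ a → ∀ d ∈ P.alts, d ≠ a → P'.rel i c d = P.rel i c d) ∧
    (∀ j ∈ P.voters, j ≠ i → ∀ x ∈ P.alts, ∀ y ∈ P.alts, P'.rel j x y = P.rel j x y)

/-- Anonymity relative to a domain `D` of profiles. -/
def Anonymity (D : Set (Profile α)) (F : Profile α → Finset α) : Prop :=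
  ∀ P ∈ D, ∀ P' ∈ D, P.alts = P'.alts →
    (∃ π : Equiv.Perm ℕ, P.voters.image π = P'.voters ∧
      ∀ i ∈ P.voters, ∀ a ∈ P.alts, ∀ b ∈ P.alts, P.rel i a b = P'.rel (π i) a b) →
    F P = F P'

/-- Neutrality relative to a domain `D` of profiles. -/
def Neutrality (D : Set (Profile α)) (F : Profile α → Finset α) : Prop :=
  ∀ P ∈ D, ∀ P' ∈ D, P.voters = P'.voters →
    ∀ τ : Equiv.Perm α, P.alts.image τ = P'.alts →
      (∀ i ∈ P.voters, ∀ a ∈ P.alts, ∀ b ∈ P.alts, P.rel i a b = P'.rel i (τ a) (τ b)) →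
      (F P).image τ = F P'

/-- Weak positive responsiveness relative to a domain `D` of profiles. -/
def WeakPositiveResponsiveness (D : Set (Profile α)) (F : Profile α → Finset α) : Prop :=
  ∀ P ∈ D, ∀ P' ∈ D, ∀ a ∈ F P, MoveLastToFirst P P' a → F P' = {a}

/-- (Full) positive responsiveness relative to a domain `D` of profiles. -/
def PositiveResponsiveness (D : Set (Profile α)) (F : Profile α → Finset α) : Prop :=
  ∀ P ∈ D, ∀ P' ∈ D, ∀ a ∈ F P, ImproveFor P P' a → F P' = {a}

/-- Positive involvement relative to a domain `D` of profiles. -/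
def PositiveInvolvement (D : Set (Profile α)) (F : Profile α → Finset α) : Prop :=
  ∀ P ∈ D, ∀ P' ∈ D, ∀ a ∈ F P, AddTopVoter P P' a → a ∈ F P'

/-- Near immunity to spoilers relative to a domain `D` of profiles. -/
def NearImmunityToSpoilers (D : Set (Profile α)) (F : Profile α → Finset α) : Prop :=
  ∀ P ∈ D, ∀ a ∈ P.alts, ∀ b ∈ P.alts,
    P.minus b ∈ D → P.restrict {a, b} ∈ D →
    F (P.minus b) = {a} → F (P.restrict {a, b}) = {a} → b ∉ F P → a ∈ F P

/-- Immunity to spoilers relative to a domain `D` of profiles. -/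
def ImmunityToSpoilers (D : Set (Profile α)) (F : Profile α → Finset α) : Prop :=
  ∀ P ∈ D, ∀ a ∈ P.alts, ∀ b ∈ P.alts,
    P.minus b ∈ D → P.restrict {a, b} ∈ D →
    a ∈ F (P.minus b) → F (P.restrict {a, b}) = {a} → b ∉ F P → a ∈ F P

/-- (Inclusion) homogeneity relative to a domain `D` of profiles. -/
def Homogeneity (D : Set (Profile α)) (F : Profile α → Finset α) : Prop :=
  ∀ P ∈ D, P.double ∈ D ∧ F P ⊆ F P.double

/-- Block preservation relative to a domain `D` of profiles. -/
def BlockPreservation (D : Set (Profile α)) (F : Profile α → Finset α) : Prop :=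
  ∀ P ∈ D, ∀ Q ∈ D, Disjoint P.voters Q.voters → IsBlock P.alts Q →
    P.combine Q ∈ D ∧ F P ⊆ F (P.combine Q)

/-- Condorcet consistency relative to a domain `D` of profiles. -/
def CondorcetConsistent (D : Set (Profile α)) (F : Profile α → Finset α) : Prop :=
  ∀ P ∈ D, ∀ c ∈ P.alts, (∀ x ∈ P.alts, x ≠ c → 0 < Margin P c x) → F P = {c}

/-- The domain of all (strict-weak-order) profiles with exactly two alternatives. -/
def Dom2 (α : Type*) : Set (Profile α) :=
  {P | IsSWO P ∧ P.voters.Nonempty ∧ P.alts.card = 2}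

/-- The domain of all profiles with two or three alternatives. -/
def Dom23 (α : Type*) : Set (Profile α) :=
  {P | IsSWO P ∧ P.voters.Nonempty ∧ (P.alts.card = 2 ∨ P.alts.card = 3)}

/-- The domain of all profiles with at least two alternatives. -/
def DomGe2 (α : Type*) : Set (Profile α) :=
  {P | IsSWO P ∧ P.voters.Nonempty ∧ 2 ≤ P.alts.card}

/-- The domain of all profiles. -/
def DomAll (α : Type*) : Set (Profile α) :=
  {P | IsSWO P ∧ P.voters.Nonempty ∧ P.alts.Nonempty}

/-- The support-based Minimax score of `a`: the maximum of `Support P b a`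
over all `b` with a positive margin over `a` (`0` if there is no such `b`). -/
def SupportMMScore (P : Profile α) (a : α) : ℕ :=
  ((((P.alts.erase a).filter fun b => 0 < Margin P b a).image fun b =>
    Support P b a).max).unbotD 0

/-- Support-based Minimax: alternatives with minimal support-based Minimax score. -/
def SupportMinimax (P : Profile α) : Finset α :=
  P.alts.filter fun a => ∀ b ∈ P.alts, SupportMMScore P a ≤ SupportMMScore P b

/-- The set of weak Condorcet winners in `P`. -/
def WeakCondorcetWinners (P : Profile α) : Finset α :=
  P.alts.filter fun a => ∀ x ∈ P.alts, 0 ≤ Margin P a x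

/-- The plurality score of `a`: the number of voters ranking `a` uniquely first. -/
def PluralityScore (P : Profile α) (a : α) : ℕ :=
  (P.voters.filter fun i => ∀ b ∈ P.alts, b ≠ a → P.rel i a b = true).card

/-- The Condorcet-Plurality voting method: the weak Condorcet winners if there
are any; otherwise the alternatives with maximal plurality score. -/
def CP (P : Profile α) : Finset α :=
  if (WeakCondorcetWinners P).Nonempty then WeakCondorcetWinners P
  else P.alts.filter fun a => ∀ b ∈ P.alts, PluralityScore P b ≤ PluralityScore P a

/-- The marginal Borda score of `a`: the sum of the margins of `a` over the
alternatives. -/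
def MarginalBorda (P : Profile α) (a : α) : ℤ :=
  ∑ b ∈ P.alts, Margin P a b

/-- Minimax MB: the Minimax winners with greatest marginal Borda score. -/
def MinimaxMB (P : Profile α) : Finset α :=
  (Minimax P).filter fun a => ∀ b ∈ Minimax P, MarginalBorda P b ≤ MarginalBorda P a

/-- `P` and `P'` have the same ordinal margin graph. -/
def SameOrdinalMarginGraph (P P' : Profile α) : Prop :=
  P.alts = P'.alts ∧
  (∀ a ∈ P.alts, ∀ b ∈ P.alts, (0 < Margin P a b ↔ 0 < Margin P' a b)) ∧
  (∀ a ∈ P.alts, ∀ b ∈ P.alts, ∀ c ∈ P.alts, ∀ d ∈ P.alts,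
    (Margin P c d ≤ Margin P a b ↔ Margin P' c d ≤ Margin P' a b))

/-- Ordinal margin invariance relative to a domain `D` of profiles. -/
def OrdinalMarginInvariance (D : Set (Profile α)) (F : Profile α → Finset α) : Prop :=
  ∀ P ∈ D, ∀ P' ∈ D, SameOrdinalMarginGraph P P' → F P = F P'

/-- `P` is uniquely-weighted: distinct pairs of distinct alternatives have
distinct margins. -/
def UniquelyWeighted (P : Profile α) : Prop :=
  ∀ a ∈ P.alts, ∀ b ∈ P.alts, ∀ c ∈ P.alts, ∀ d ∈ P.alts,
    a ≠ b → c ≠ d → (a, b) ≠ (c, d) → Margin P a b ≠ Margin P c d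
end MayMinimax

/-!
On two alternatives the axioms force majority rule. Anonymity and neutrality make a profile
equivalent to its mirror image (the two alternatives exchanged) whenever the numbers of voters
on either side match; in particular a tied profile is symmetric. If the majority loser `y` were
chosen, moving `y` to the top of a ballot ranking `x` above `y` would make `y` the unique winner
by weak positive responsiveness while lowering the margin by two; for margins one and two this
contradicts the symmetries, and larger margins follow by induction.

On three alternatives, suppose some `b` other than the Condorcet winner `c` is chosen in `P`, and
let `a` be the third alternative. Homogeneity (twice) and block preservation keep `b` chosen in
`4P` plus a block of all linear orders; the block leaves the margins unchanged and contains a voter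
ranking `a > c > b`. Moving `b` to the top of that ballot makes `b` the unique winner, while `c`
still beats `a` and `b`, since quadrupled margins survive a loss of two. By majority rule `c` wins
both two-alternative restrictions containing it, so near immunity to spoilers puts `c` among the
winners: a contradiction.
-/

open Finset

lemma Finset.exists_perm_image_eq_of_card_fiber_eq {ι β : Type*} [DecidableEq ι] [DecidableEq β]
    {V : Finset ι} {f g : ι → β} (h : ∀ b, #{i ∈ V | f i = b} = #{i ∈ V | g i = b}) :
    ∃ π : Equiv.Perm ι, V.image π = V ∧ ∀ i ∈ V, g (π i) = f i := by
  have e : ∀ b, {i : V // f i = b} ≃ {i : V // g i = b} := fun b =>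
    Fintype.equivOfCardEq <| by
      simpa only [Fintype.card_subtype, card_filter,
        sum_coe_sort V (fun i => if f i = b then 1 else 0),
        sum_coe_sort V (fun i => if g i = b then 1 else 0)] using h b
  let σ : Equiv.Perm V := Equiv.ofFiberEquiv e
  have hσ : ∀ i (hi : i ∈ V), σ.ofSubtype i = σ ⟨i, hi⟩ := fun i hi =>
    Equiv.Perm.ofSubtype_apply_of_mem σ hi
  refine ⟨σ.ofSubtype, eq_of_subset_of_card_le (fun j hj => ?_)
    (card_image_of_injective _ (Equiv.injective _)).ge,
    fun i hi => by rw [hσ i hi]; exact Equiv.ofFiberEquiv_map e ⟨i, hi⟩⟩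
  obtain ⟨i, hi, rfl⟩ := mem_image.1 hj
  rw [hσ i hi]
  exact (σ ⟨i, hi⟩).2

lemma Finset.add_sup_add_one_notMem (V : Finset ℕ) (i : ℕ) : i + (V.sup id + 1) ∉ V :=
  fun hi => by
    have := le_sup (f := id) hi
    simp only [id] at this
    omega

lemma Finset.exists_eq_triple_of_card_eq_three {α : Type*} [DecidableEq α] {X : Finset α}
    (hX : X.card = 3) {b c : α} (hb : b ∈ X) (hc : c ∈ X) (hbc : b ≠ c) :
    ∃ a, X = {a, b, c} ∧ a ≠ b ∧ a ≠ c := by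
  have hb' : b ∈ X.erase c := mem_erase.2 ⟨hbc, hb⟩
  obtain ⟨a, ha⟩ := card_eq_one.1 <| by
    rw [card_erase_of_mem hb', card_erase_of_mem hc, hX]
  have haX : a ∈ (X.erase c).erase b := ha ▸ mem_singleton_self a
  refine ⟨a, ?_, (mem_erase.1 haX).1, (mem_erase.1 (mem_of_mem_erase haX)).1⟩
  rw [← insert_erase hc, ← insert_erase hb', ha]
  ext
  simp only [mem_insert, mem_singleton]
  tauto

namespace MayMinimax

section Ballots
variable {α : Type*}

lemma IsLinearOn.congr {r r' : α → α → Bool} {X : Finset α} (h : IsLinearOn r X)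
    (hrr' : ∀ a ∈ X, ∀ b ∈ X, r a b = r' a b) : IsLinearOn r' X := by
  obtain ⟨hirr, htrans, htot, hasymm⟩ := h
  refine ⟨fun a ha => ?_, fun a ha b hb c hc => ?_, fun a ha b hb hab => ?_,
    fun a ha b hb => ?_⟩
  · rw [← hrr' a ha a ha]; exact hirr a ha
  · rw [← hrr' a ha b hb, ← hrr' b hb c hc, ← hrr' a ha c hc]; exact htrans a ha b hb c hc
  · rw [← hrr' a ha b hb, ← hrr' b hb a ha]; exact htot a ha b hb hab
  · rw [← hrr' a ha b hb, ← hrr' b hb a ha]; exact hasymm a ha b hb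

lemma IsLinearOn.flip {r : α → α → Bool} {X : Finset α} (h : IsLinearOn r X) :
    IsLinearOn (flip r) X := by
  obtain ⟨hirr, htrans, htot, hasymm⟩ := h
  exact ⟨hirr, fun a ha b hb c hc hab hbc => htrans c hc b hb a ha hbc hab,
    fun a ha b hb hab => (htot a ha b hb hab).symm, fun a ha b hb => hasymm b hb a ha⟩

lemma IsLinearOn.negTrans {r : α → α → Bool} {X : Finset α} (h : IsLinearOn r X) :
    ∀ a ∈ X, ∀ b ∈ X, ∀ c ∈ X, r a b = false → r b c = false → r a c = false := by
  obtain ⟨-, htrans, htot, -⟩ := h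
  intro a ha b hb c hc hab hbc
  by_contra hac
  rw [Bool.not_eq_false] at hac
  by_cases hba : b = a
  · subst hba; rw [hac] at hbc; exact Bool.noConfusion hbc
  · have hba' : r b a = true := (htot a ha b hb (Ne.symm hba)).resolve_left (by simp [hab])
    rw [htrans b hb a ha c hc hba' hac] at hbc
    exact Bool.noConfusion hbc

lemma isSWO_of_isLinearOn {P : Profile α} (h : ∀ i ∈ P.voters, IsLinearOn (P.rel i) P.alts) :
    IsSWO P := fun i hi => ⟨(h i hi).2.2.2, (h i hi).negTrans⟩

lemma IsSWO.rel_self_eq_false {P : Profile α} (hP : IsSWO P) {i : ℕ} (hi : i ∈ P.voters)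
    {a : α} (ha : a ∈ P.alts) : P.rel i a a = false := by
  cases h : P.rel i a a
  · rfl
  · simpa [h] using (hP i hi).1 a ha a ha h

def scoreOrder (s : α → ℕ) : α → α → Bool := fun a b => decide (s b < s a)

lemma isLinearOn_scoreOrder {s : α → ℕ} {X : Finset α} (hs : Set.InjOn s X) :
    IsLinearOn (scoreOrder s) X := by
  refine ⟨fun a _ => ?_, fun a _ b _ c _ hab hbc => ?_, fun a ha b hb hne => ?_,
    fun a _ b _ hab => ?_⟩ <;>
    simp only [scoreOrder, decide_eq_true_eq, decide_eq_false_iff_not] at *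
  · exact lt_irrefl _
  · exact hbc.trans hab
  · exact lt_or_gt_of_ne fun h => hne (hs hb ha h).symm
  · exact hab.not_gt

def Profile.updateVoter (P : Profile α) (v : ℕ) (r : α → α → Bool) : Profile α :=
  { P with rel := Function.update P.rel v r }

lemma updateVoter_mem_Dom23 {P : Profile α} (hP : P ∈ Dom23 α) (v : ℕ) {r : α → α → Bool}
    (hr : IsLinearOn r P.alts) : P.updateVoter v r ∈ Dom23 α := by
  refine ⟨fun i hi => ?_, hP.2⟩
  by_cases hiv : i = v
  · subst hiv
    simpa [Profile.updateVoter] using And.intro hr.2.2.2 hr.negTrans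
  · simpa [Profile.updateVoter, Function.update_of_ne hiv] using hP.1 i hi

lemma moveLastToFirst_updateVoter {P : Profile α} {v : ℕ} (hv : v ∈ P.voters) {a : α}
    (ha : a ∈ P.alts) {r : α → α → Bool} (hlast : ∀ b ∈ P.alts, b ≠ a → P.rel v b a = true)
    (htop : ∀ b ∈ P.alts, b ≠ a → r a b = true)
    (hrest : ∀ b ∈ P.alts, b ≠ a → ∀ c ∈ P.alts, c ≠ a → r b c = P.rel v b c) :
    MoveLastToFirst P (P.updateVoter v r) a := by
  refine ⟨rfl, rfl, ha, v, hv, hlast, ?_, ?_, fun j _ hjv _ _ _ _ => ?_⟩ <;>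
    simp_all [Profile.updateVoter, Function.update_of_ne]

end Ballots

section Supports
variable {α : Type*}

lemma support_eq_sum (P : Profile α) (x y : α) :
    Support P x y = ∑ i ∈ P.voters, if P.rel i x y then 1 else 0 :=
  card_filter _ _

lemma margin_eq_support_sub_support (P : Profile α) (x y : α) :
    Margin P x y = Support P x y - Support P y x := rfl

lemma support_combine {P Q : Profile α} (hd : Disjoint P.voters Q.voters) (x y : α) :
    Support (P.combine Q) x y = Support P x y + Support Q x y := by
  simp only [support_eq_sum, Profile.combine]
  rw [sum_union hd]
  congr 1
  · exact sum_congr rfl fun i hi => by simp only [if_pos hi]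
  · exact sum_congr rfl fun i hi => by simp only [if_neg (disjoint_right.1 hd hi)]

lemma support_double (P : Profile α) (x y : α) :
    Support P.double x y = 2 * Support P x y := by
  have hfresh := add_sup_add_one_notMem P.voters
  have hd : Disjoint P.voters (P.voters.image (· + (P.voters.sup id + 1))) :=
    disjoint_right.2 fun j hj => by
      obtain ⟨i, -, rfl⟩ := mem_image.1 hj
      exact hfresh i
  simp only [support_eq_sum, Profile.double]
  rw [sum_union hd, sum_image (add_left_injective _).injOn, two_mul]
  congr 1
  · exact sum_congr rfl fun i hi => by simp only [if_pos hi]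
  · exact sum_congr rfl fun i _ => by simp only [if_neg (hfresh i), Nat.add_sub_cancel]

lemma support_updateVoter {P : Profile α} {v : ℕ} (hv : v ∈ P.voters) (r : α → α → Bool)
    (x y : α) :
    Support (P.updateVoter v r) x y + (if P.rel v x y then 1 else 0) =
      Support P x y + (if r x y then 1 else 0) := by
  have hothers : ∑ i ∈ P.voters.erase v, (if Function.update P.rel v r i x y then 1 else 0) =
      ∑ i ∈ P.voters.erase v, if P.rel i x y then 1 else 0 :=
    sum_congr rfl fun i hi => by simp only [Function.update_of_ne (ne_of_mem_erase hi)]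
  simp only [support_eq_sum, Profile.updateVoter]
  rw [← add_sum_erase _ _ hv, ← add_sum_erase _ _ hv, hothers]
  simp only [Function.update_self]
  ring

lemma card_filter_rel_true_and_rel_false {P : Profile α} (hP : IsSWO P) {x y : α}
    (hx : x ∈ P.alts) (hy : y ∈ P.alts) :
    #{i ∈ P.voters | P.rel i x y = true ∧ P.rel i y x = false} = Support P x y :=
  congrArg card <| filter_congr fun i hi => by
    simpa using fun h => (hP i hi).1 x hx y hy h

lemma card_filter_rel_true_and_rel_true {P : Profile α} (hP : IsSWO P) {x y : α}
    (hx : x ∈ P.alts) (hy : y ∈ P.alts) :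
    #{i ∈ P.voters | P.rel i x y = true ∧ P.rel i y x = true} = 0 :=
  card_eq_zero.2 <| filter_eq_empty_iff.2 fun i hi => by
    simpa using fun h => (hP i hi).1 x hx y hy h

lemma card_voters_eq_tied_add_support_add_support {P : Profile α} (hP : IsSWO P) {x y : α}
    (hx : x ∈ P.alts) (hy : y ∈ P.alts) :
    #P.voters = #{i ∈ P.voters | P.rel i x y = false ∧ P.rel i y x = false} +
      Support P x y + Support P y x := by
  have := card_eq_sum_card_fiberwise (f := fun i => (P.rel i x y, P.rel i y x))
    (s := P.voters) (t := univ) fun _ _ => mem_coe.2 (mem_univ _)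
  simp only [Fintype.sum_prod_type, Fintype.sum_bool, Prod.mk.injEq] at this
  rw [this, card_filter_rel_true_and_rel_false hP hx hy,
    card_filter_rel_true_and_rel_true hP hx hy, ← card_filter_rel_true_and_rel_false hP hy hx]
  simp only [and_comm]
  ring

end Supports

section Alternatives
variable {α : Type*} [DecidableEq α]

lemma support_restrict (P : Profile α) {Y : Finset α} {x y : α} (hx : x ∈ Y) (hy : y ∈ Y) :
    Support (P.restrict Y) x y = Support P x y := by
  simp [Support, Profile.restrict, hx, hy]

lemma margin_restrict (P : Profile α) {Y : Finset α} {x y : α} (hx : x ∈ Y) (hy : y ∈ Y) :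
    Margin (P.restrict Y) x y = Margin P x y := by
  rw [margin_eq_support_sub_support, margin_eq_support_sub_support, support_restrict P hx hy,
    support_restrict P hy hx]

lemma isSWO_restrict {P : Profile α} (hP : IsSWO P) {Y : Finset α} (hY : Y ⊆ P.alts) :
    IsSWO (P.restrict Y) := by
  intro i hi
  refine ⟨fun a (ha : a ∈ Y) b (hb : b ∈ Y) hab => ?_,
    fun a (ha : a ∈ Y) b (hb : b ∈ Y) c (hc : c ∈ Y) hab hbc => ?_⟩
  · simp only [Profile.restrict, ha, hb, decide_true, Bool.and_true] at hab ⊢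
    exact (hP i hi).1 a (hY ha) b (hY hb) hab
  · simp only [Profile.restrict, ha, hb, hc, decide_true, Bool.and_true] at hab hbc ⊢
    exact (hP i hi).2 a (hY ha) b (hY hb) c (hY hc) hab hbc

lemma restrict_mem_Dom23 {P : Profile α} (hP : P ∈ Dom23 α) {Y : Finset α} (hY : Y ⊆ P.alts)
    (hcard : Y.card = 2) : P.restrict Y ∈ Dom23 α :=
  ⟨isSWO_restrict hP.1 hY, hP.2.1, Or.inl hcard⟩

def Profile.relabel (P : Profile α) (τ : Equiv.Perm α) : Profile α where
  voters := P.voters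
  alts := P.alts.image τ
  rel i a b := P.rel i (τ.symm a) (τ.symm b)

lemma relabel_mem_Dom23 {P : Profile α} (hP : P ∈ Dom23 α) (τ : Equiv.Perm α) :
    P.relabel τ ∈ Dom23 α := by
  obtain ⟨hswo, hne, hcard⟩ := hP
  have hmem : ∀ {a}, a ∈ (P.relabel τ).alts → τ.symm a ∈ P.alts := fun ha => by
    obtain ⟨b, hb, rfl⟩ := mem_image.1 ha
    simpa using hb
  refine ⟨fun i hi => ⟨fun a ha b hb => ?_, fun a ha b hb c hc => ?_⟩, hne, ?_⟩
  · exact (hswo i hi).1 _ (hmem ha) _ (hmem hb)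
  · exact (hswo i hi).2 _ (hmem ha) _ (hmem hb) _ (hmem hc)
  · rwa [Profile.relabel, card_image_of_injective _ τ.injective]

lemma isLinearOn_scoreOrder_triple {s : α → ℕ} {a b c : α} (hbc : s b < s c)
    (hca : s c < s a) : IsLinearOn (scoreOrder s) {a, b, c} := isLinearOn_scoreOrder <| by
  intro u hu w hw huw
  simp only [coe_insert, coe_singleton, Set.mem_insert_iff, Set.mem_singleton_iff] at hu hw
  rcases hu with rfl | rfl | rfl <;> rcases hw with rfl | rfl | rfl <;> first | rfl | omega

end Alternatives

section Blocks
variable {α : Type*}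

lemma IsBlock.support_le {X : Finset α} {Q : Profile α} (hQ : IsBlock X Q) {a b : α}
    (ha : a ∈ X) (hb : b ∈ X) : Support Q a b ≤ Support Q b a := by
  obtain ⟨-, hlin, huniq⟩ := hQ
  -- each voter is matched with the voter holding the reversed ballot
  choose! rev hrevV hrev using fun i (hi : i ∈ Q.voters) => (huniq _ (hlin i hi).flip).exists
  refine card_le_card_of_injOn rev (fun i hi => ?_) (fun i hi j hj hij => ?_)
  · rw [coe_filter] at hi ⊢
    exact ⟨hrevV i hi.1, (hrev i hi.1 b hb a ha).trans hi.2⟩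
  · rw [coe_filter] at hi hj
    refine (huniq _ (hlin i hi.1)).unique ⟨hi.1, fun _ _ _ _ => rfl⟩
      ⟨hj.1, fun u hu w hw => ?_⟩
    have hflip := hrev j hj.1 w hw u hu
    rw [← hij, hrev i hi.1 w hw u hu] at hflip
    exact hflip.symm

lemma IsBlock.support_eq {X : Finset α} {Q : Profile α} (hQ : IsBlock X Q) {a b : α}
    (ha : a ∈ X) (hb : b ∈ X) : Support Q a b = Support Q b a :=
  (hQ.support_le ha hb).antisymm (hQ.support_le hb ha)

lemma IsBlock.mem_Dom23 {X : Finset α} {Q : Profile α} (hQ : IsBlock X Q)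
    (hX : X.card = 2 ∨ X.card = 3) (hne : Q.voters.Nonempty) : Q ∈ Dom23 α := by
  obtain ⟨rfl, hlin, -⟩ := hQ
  exact ⟨isSWO_of_isLinearOn hlin, hne, hX⟩

lemma exists_isBlock (X : Finset α) (V : Finset ℕ) :
    ∃ Q, IsBlock X Q ∧ Disjoint V Q.voters := by
  classical
  let ballot : Finset (α × α) → α → α → Bool := fun s a b => decide ((a, b) ∈ s)
  -- the linear orders of `X`, encoded by their graphs
  let O := (X ×ˢ X).powerset.filter fun s => IsLinearOn (ballot s) X
  let W := (range #O).image (· + (V.sup id + 1))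
  let e : W ≃ O := equivOfCardEq <| by
    rw [card_image_of_injective _ (add_left_injective _), card_range]
  let Q : Profile α := ⟨W, X, fun i => if h : i ∈ W then ballot (e ⟨i, h⟩) else ballot ∅⟩
  have hrel : ∀ i (hi : i ∈ W), Q.rel i = ballot (e ⟨i, hi⟩) := fun i hi => dif_pos hi
  refine ⟨Q, ⟨rfl, fun i hi => ?_, fun r hr => ?_⟩, disjoint_right.2 fun i hi => ?_⟩
  · rw [hrel i hi]
    exact (mem_filter.1 (e ⟨i, hi⟩).2).2
  · let s := (X ×ˢ X).filter fun p => r p.1 p.2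
    have hballot : ∀ a ∈ X, ∀ b ∈ X, ballot s a b = r a b := fun a ha b hb => by
      simp [ballot, s, ha, hb]
    have hs : s ∈ O := mem_filter.2 ⟨mem_powerset.2 (filter_subset _ _),
      hr.congr fun a ha b hb => (hballot a ha b hb).symm⟩
    refine ⟨e.symm ⟨s, hs⟩, ⟨(e.symm _).2, fun a ha b hb => ?_⟩, fun j ⟨hj, hjr⟩ => ?_⟩
    · rw [hrel _ (e.symm _).2, Subtype.coe_eta, Equiv.apply_symm_apply]
      exact hballot a ha b hb
    · suffices h : e ⟨j, hj⟩ = ⟨s, hs⟩ by rw [← h, Equiv.symm_apply_apply]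
      refine Subtype.ext ?_
      have hsub : (e ⟨j, hj⟩ : Finset (α × α)) ⊆ X ×ˢ X :=
        mem_powerset.1 (mem_filter.1 (e ⟨j, hj⟩).2).1
      ext ⟨a, b⟩
      simp only [s, mem_filter, mem_product]
      constructor
      · intro hab
        obtain ⟨ha, hb⟩ := mem_product.1 (hsub hab)
        refine ⟨⟨ha, hb⟩, ?_⟩
        rw [← hjr a ha b hb, hrel j hj]
        simpa [ballot] using hab
      · rintro ⟨⟨ha, hb⟩, hab⟩
        rw [← hjr a ha b hb, hrel j hj] at hab
        simpa [ballot] using hab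
  · obtain ⟨k, -, rfl⟩ := mem_image.1 hi
    exact add_sup_add_one_notMem V k

lemma exists_profile_with_ballot {F : Profile α → Finset α} (hom : Homogeneity (Dom23 α) F)
    (bp : BlockPreservation (Dom23 α) F) {P : Profile α} (hP : P ∈ Dom23 α)
    {r : α → α → Bool} (hr : IsLinearOn r P.alts) :
    ∃ Q ∈ Dom23 α, Q.alts = P.alts ∧ F P ⊆ F Q ∧
      (∀ a ∈ P.alts, ∀ b ∈ P.alts, Margin Q a b = 4 * Margin P a b) ∧
      ∃ v ∈ Q.voters, ∀ a ∈ P.alts, ∀ b ∈ P.alts, Q.rel v a b = r a b := by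
  obtain ⟨hP₂, hsub₂⟩ := hom P hP
  obtain ⟨hP₄, hsub₄⟩ := hom _ hP₂
  obtain ⟨B, hB, hdisj⟩ := exists_isBlock P.alts P.double.double.voters
  obtain ⟨v, ⟨hvB, hv⟩, -⟩ := hB.2.2 r hr
  obtain ⟨hQ, hsubQ⟩ := bp _ hP₄ B (hB.mem_Dom23 hP.2.2 ⟨v, hvB⟩) hdisj hB
  refine ⟨_, hQ, rfl, hsub₂.trans (hsub₄.trans hsubQ), fun a ha b hb => ?_, v,
    mem_union_right _ hvB, fun a ha b hb => ?_⟩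
  · simp only [margin_eq_support_sub_support, support_combine hdisj, support_double,
      hB.support_eq ha hb]
    push_cast
    ring
  · simp only [Profile.combine, if_neg (disjoint_right.1 hdisj hvB)]
    exact hv a ha b hb

end Blocks

section TwoAlternatives
variable {α : Type*} [DecidableEq α] {F : Profile α → Finset α}

lemma image_eq_of_neutrality (neut : Neutrality (Dom23 α) F) {P : Profile α}
    (hP : P ∈ Dom23 α) (τ : Equiv.Perm α) : (F P).image τ = F (P.relabel τ) :=
  neut P hP _ (relabel_mem_Dom23 hP τ) rfl τ rfl fun i _ a _ b _ => by simp [Profile.relabel]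

/-- On two alternatives, the numbers of voters ranking each alternative above the other
determine a profile up to renaming the voters. -/
lemma eq_of_support_eq (anon : Anonymity (Dom23 α) F) {R R' : Profile α} (hR : R ∈ Dom23 α)
    (hR' : R' ∈ Dom23 α) {x y : α} (halts : R.alts = {x, y}) (halts' : R'.alts = {x, y})
    (hV : R.voters = R'.voters) (hxy : Support R x y = Support R' x y)
    (hyx : Support R y x = Support R' y x) : F R = F R' := by
  let ballot : Profile α → ℕ → Bool × Bool := fun Q i => (Q.rel i x y, Q.rel i y x)
  have hx : x ∈ R.alts := by simp [halts]
  have hy : y ∈ R.alts := by simp [halts]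
  have hx' : x ∈ R'.alts := by simp [halts']
  have hy' : y ∈ R'.alts := by simp [halts']
  have hfiber : ∀ c, #{i ∈ R.voters | ballot R i = c} = #{i ∈ R.voters | ballot R' i = c} := by
    have htotal := card_voters_eq_tied_add_support_add_support hR.1 hx hy
    have htotal' := card_voters_eq_tied_add_support_add_support hR'.1 hx' hy'
    rw [← hV] at htotal'
    rintro ⟨_ | _, _ | _⟩ <;> simp only [ballot, Prod.mk.injEq]
    · omega
    · simp only [and_comm (a := _ = false)]
      rw [card_filter_rel_true_and_rel_false hR.1 hy hx, hyx, hV,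
        card_filter_rel_true_and_rel_false hR'.1 hy' hx']
    · rw [card_filter_rel_true_and_rel_false hR.1 hx hy, hxy, hV,
        card_filter_rel_true_and_rel_false hR'.1 hx' hy']
    · rw [card_filter_rel_true_and_rel_true hR.1 hx hy, hV,
        card_filter_rel_true_and_rel_true hR'.1 hx' hy']
  obtain ⟨π, hπV, hπ⟩ := exists_perm_image_eq_of_card_fiber_eq hfiber
  refine anon R hR R' hR' (halts.trans halts'.symm)
    ⟨π, hπV.trans hV, fun i hi a ha b hb => ?_⟩
  have hπi : π i ∈ R'.voters := hV ▸ hπV ▸ mem_image_of_mem π hi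
  obtain ⟨h1, h2⟩ := Prod.mk.inj (hπ i hi)
  rw [halts, mem_insert, mem_singleton] at ha hb
  rcases ha with rfl | rfl <;> rcases hb with rfl | rfl
  all_goals first
    | exact h1.symm
    | exact h2.symm
    | rw [hR.1.rel_self_eq_false hi ‹_›, hR'.1.rel_self_eq_false hπi ‹_›]

lemma image_swap_eq_of_support_eq (anon : Anonymity (Dom23 α) F)
    (neut : Neutrality (Dom23 α) F) {R R' : Profile α} (hR : R ∈ Dom23 α) (hR' : R' ∈ Dom23 α)
    {x y : α} (halts : R.alts = {x, y}) (halts' : R'.alts = {x, y})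
    (hV : R.voters = R'.voters) (hxy : Support R x y = Support R' y x)
    (hyx : Support R y x = Support R' x y) : (F R).image (Equiv.swap x y) = F R' := by
  rw [image_eq_of_neutrality neut hR]
  refine eq_of_support_eq anon (relabel_mem_Dom23 hR _) hR' ?_ halts' hV ?_ ?_
  · simp [Profile.relabel, halts, pair_comm]
  · simpa [Profile.relabel, Support] using hyx
  · simpa [Profile.relabel, Support] using hxy

lemma notMem_of_margin_eq (anon : Anonymity (Dom23 α) F) (neut : Neutrality (Dom23 α) F)
    (wpr : WeakPositiveResponsiveness (Dom23 α) F) {x y : α} (hxy : x ≠ y) (n : ℕ) :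
    ∀ R ∈ Dom23 α, R.alts = {x, y} → Margin R x y = n → 0 < n → y ∉ F R := by
  induction n using Nat.strong_induction_on with
  | _ n ih =>
  intro R hR halts hn hpos hyF
  have hx : x ∈ R.alts := by simp [halts]
  have hy : y ∈ R.alts := by simp [halts]
  rw [margin_eq_support_sub_support] at hn
  obtain ⟨v, hv⟩ : (R.voters.filter fun i => R.rel i x y = true).Nonempty :=
    card_pos.1 (by change 0 < Support R x y; omega)
  rw [mem_filter] at hv
  let r := scoreOrder fun u => if u = y then 1 else 0
  have hr : IsLinearOn r R.alts := isLinearOn_scoreOrder <| by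
    rw [halts]
    intro a ha b hb hab
    simp only [coe_insert, coe_singleton, Set.mem_insert_iff, Set.mem_singleton_iff] at ha hb
    rcases ha with rfl | rfl <;> rcases hb with rfl | rfl <;> simp_all
  set R₁ := R.updateVoter v r
  have hR₁ : R₁ ∈ Dom23 α := updateVoter_mem_Dom23 hR v hr
  have hF₁ : F R₁ = {y} := by
    refine wpr R hR R₁ hR₁ y hyF (moveLastToFirst_updateVoter hv.1 hy ?_ ?_ ?_) <;>
      simp only [halts, mem_insert, mem_singleton] <;> rintro b (rfl | rfl) hb <;>
      simp_all [r, scoreOrder, hR.1.rel_self_eq_false hv.1 hx]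
  have hsxy : Support R₁ x y + 1 = Support R x y := by
    simpa [r, scoreOrder, hv.2, hxy] using support_updateVoter hv.1 r x y
  have hsyx : Support R₁ y x = Support R y x + 1 := by
    simpa [r, scoreOrder, (hR.1 v hv.1).1 x hx y hy hv.2, hxy] using
      support_updateVoter hv.1 r y x
  rcases (by omega : n = 1 ∨ n = 2 ∨ 3 ≤ n) with rfl | rfl | hn3
  · -- `R₁` is `R` with the two alternatives exchanged
    have hswap := image_swap_eq_of_support_eq anon neut hR hR₁ halts halts rfl
      (by omega) (by omega)
    have hx₁ : x ∈ F R₁ := hswap ▸ mem_image.2 ⟨y, hyF, Equiv.swap_apply_right x y⟩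
    simp [hF₁, hxy] at hx₁
  · -- `R₁` is tied, hence symmetric in the two alternatives
    have hswap := image_swap_eq_of_support_eq anon neut hR₁ hR₁ halts halts rfl
      (by omega) (by omega)
    simp [hF₁, hxy] at hswap
  · refine ih (n - 2) (by omega) R₁ hR₁ halts ?_ (by omega) (by simp [hF₁])
    rw [margin_eq_support_sub_support]
    omega

lemma eq_singleton_of_margin_pos (hF : ∀ P ∈ Dom23 α, (F P).Nonempty ∧ F P ⊆ P.alts)
    (anon : Anonymity (Dom23 α) F) (neut : Neutrality (Dom23 α) F)
    (wpr : WeakPositiveResponsiveness (Dom23 α) F) {R : Profile α} (hR : R ∈ Dom23 α)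
    {x y : α} (hxy : x ≠ y) (halts : R.alts = {x, y}) (hm : 0 < Margin R x y) :
    F R = {x} := by
  have hy : y ∉ F R := notMem_of_margin_eq anon neut wpr hxy _ R hR halts
    (Int.toNat_of_nonneg hm.le).symm (by omega)
  obtain ⟨hne, hsub⟩ := hF R hR
  refine eq_singleton_iff_nonempty_unique_mem.2 ⟨hne, fun u hu => ?_⟩
  have := hsub hu
  rw [halts, mem_insert, mem_singleton] at this
  exact this.resolve_right (by rintro rfl; exact hy hu)

end TwoAlternatives

section ThreeAlternatives
variable {α : Type*} [DecidableEq α] {F : Profile α → Finset α}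

lemma exists_eq_singleton_of_ballot (wpr : WeakPositiveResponsiveness (Dom23 α) F)
    {Q : Profile α} (hQ : Q ∈ Dom23 α) {a b c : α} (halts : Q.alts = {a, b, c})
    (hab : a ≠ b) (hac : a ≠ c) (hbc : b ≠ c) (hb : b ∈ F Q) {v : ℕ} (hv : v ∈ Q.voters)
    {s : α → ℕ} (hsbc : s b < s c) (hsca : s c < s a)
    (hballot : ∀ u ∈ Q.alts, ∀ w ∈ Q.alts, Q.rel v u w = scoreOrder s u w) :
    ∃ Q' ∈ Dom23 α, Q'.alts = Q.alts ∧ F Q' = {b} ∧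
      Margin Q' c a = Margin Q c a ∧ Margin Q' c b = Margin Q c b - 2 := by
  -- voter `v` moves `b` from the bottom to the top of the ballot
  let s' := Function.update s b (s a + 1)
  have hs' : ∀ u, u ≠ b → s' u = s u := fun u hu => Function.update_of_ne hu _ _
  have hlin : IsLinearOn (scoreOrder s') Q.alts := by
    rw [halts, show ({a, b, c} : Finset α) = {b, c, a} by
      ext; simp only [mem_insert, mem_singleton]; tauto]
    exact isLinearOn_scoreOrder_triple (by simpa [s', hbc.symm, hab] using hsca)
      (by simp [s', hab])
  set Q' := Q.updateVoter v (scoreOrder s')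
  have hQ' : Q' ∈ Dom23 α := updateVoter_mem_Dom23 hQ v hlin
  have ha : a ∈ Q.alts := by simp [halts]
  have hb' : b ∈ Q.alts := by simp [halts]
  have hc : c ∈ Q.alts := by simp [halts]
  have hothers : ∀ u ∈ Q.alts, u ≠ b → u = a ∨ u = c := fun u hu hub => by
    rw [halts, mem_insert, mem_insert, mem_singleton] at hu
    tauto
  have hmove : MoveLastToFirst Q Q' b := by
    refine moveLastToFirst_updateVoter hv hb' (fun u hu hub => ?_) (fun u hu hub => ?_)
      (fun u hu hub w hw hwb => ?_)
    · rw [hballot u hu b hb']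
      rcases hothers u hu hub with rfl | rfl <;> simp [scoreOrder] <;> omega
    · rcases hothers u hu hub with rfl | rfl <;> simp [scoreOrder, s', hab, hbc.symm]
      omega
    · rw [hballot u hu w hw]
      simp only [scoreOrder, hs' u hub, hs' w hwb]
  have hsupport : ∀ x ∈ Q.alts, ∀ y ∈ Q.alts,
      Support Q' x y + (if scoreOrder s x y then 1 else 0) =
        Support Q x y + (if scoreOrder s' x y then 1 else 0) := fun x hx y hy =>
    hballot x hx y hy ▸ support_updateVoter hv _ x y
  have hsca' := hsupport c hc a ha
  have hsac' := hsupport a ha c hc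
  have hscb' := hsupport c hc b hb'
  have hsbc' := hsupport b hb' c hc
  simp only [scoreOrder, s', Function.update_self, Function.update_of_ne hab,
    Function.update_of_ne hbc.symm, decide_eq_true_eq] at hsca' hsac' hscb' hsbc'
  refine ⟨Q', hQ', rfl, wpr Q hQ Q' hQ' b hb hmove, ?_, ?_⟩ <;>
    simp only [margin_eq_support_sub_support] <;>
    split_ifs at hsca' hsac' hscb' hsbc' <;> omega

lemma mem_of_margin_pos_of_notMem (hF : ∀ P ∈ Dom23 α, (F P).Nonempty ∧ F P ⊆ P.alts)
    (anon : Anonymity (Dom23 α) F) (neut : Neutrality (Dom23 α) F)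
    (wpr : WeakPositiveResponsiveness (Dom23 α) F) (nits : NearImmunityToSpoilers (Dom23 α) F)
    {Q : Profile α} (hQ : Q ∈ Dom23 α) {a b c : α} (halts : Q.alts = {a, b, c}) (hab : a ≠ b)
    (hac : a ≠ c) (hbc : b ≠ c) (hca : 0 < Margin Q c a) (hcb : 0 < Margin Q c b)
    (ha : a ∉ F Q) : c ∈ F Q := by
  have hpair : ∀ x ∈ Q.alts, x ≠ c → 0 < Margin Q c x →
      Q.restrict {c, x} ∈ Dom23 α ∧ F (Q.restrict {c, x}) = {c} := fun x hx hxc hcx => by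
    have hQx : Q.restrict {c, x} ∈ Dom23 α :=
      restrict_mem_Dom23 hQ (insert_subset (by simp [halts]) (singleton_subset_iff.2 hx))
        (card_pair hxc.symm)
    refine ⟨hQx, eq_singleton_of_margin_pos hF anon neut wpr hQx hxc.symm rfl ?_⟩
    rwa [margin_restrict Q (by simp) (by simp)]
  have hminus : Q.minus a = Q.restrict {c, b} := by
    rw [Profile.minus, halts]
    congr 1
    ext
    simp only [mem_erase, mem_insert, mem_singleton]
    constructor
    · tauto
    · rintro (rfl | rfl) <;> simp [hab.symm, hac.symm]
  obtain ⟨hQb, hFb⟩ := hpair b (by simp [halts]) hbc hcb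
  obtain ⟨hQa, hFa⟩ := hpair a (by simp [halts]) hac hca
  exact nits Q hQ c (by simp [halts]) a (by simp [halts]) (hminus ▸ hQb) hQa (hminus ▸ hFb)
    hFa ha

theorem condorcet_consistency_from_axioms_general {α : Type*} [DecidableEq α]
    (F : Profile α → Finset α)
    (hF : ∀ P ∈ Dom23 α, (F P).Nonempty ∧ F P ⊆ P.alts)
    (anon : Anonymity (Dom23 α) F)
    (neut : Neutrality (Dom23 α) F)
    (wpr : WeakPositiveResponsiveness (Dom23 α) F)
    (nits : NearImmunityToSpoilers (Dom23 α) F)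
    (hom : Homogeneity (Dom23 α) F)
    (bp : BlockPreservation (Dom23 α) F) :
    ∀ P ∈ Dom23 α, P.alts.card = 3 →
      ∀ c ∈ P.alts, (∀ x ∈ P.alts, x ≠ c → 0 < Margin P c x) →
        F P = {c} := by
  intro P hP h3 c hc hcon
  refine eq_singleton_iff_nonempty_unique_mem.2 ⟨(hF P hP).1, fun b hb => ?_⟩
  by_contra hbc
  obtain ⟨a, halts, hab, hac⟩ := exists_eq_triple_of_card_eq_three h3 ((hF P hP).2 hb) hc hbc
  have ha : a ∈ P.alts := by simp [halts]
  have hb' : b ∈ P.alts := by simp [halts]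
  -- a voter with ballot `a > c > b`, in a scaled-up copy of `P` plus a block
  let s : α → ℕ := fun u => if u = a then 2 else if u = c then 1 else 0
  have hsbc : s b < s c := by simp [s, hab.symm, hbc, hac.symm]
  have hsca : s c < s a := by simp [s, hac.symm]
  obtain ⟨Q, hQ, hQalts, hFQ, hQmargin, v, hv, hballot⟩ := exists_profile_with_ballot hom bp hP
    (r := scoreOrder s) (halts ▸ isLinearOn_scoreOrder_triple hsbc hsca)
  obtain ⟨Q', hQ', hQ'alts, hFQ', hca, hcb⟩ := exists_eq_singleton_of_ballot wpr hQ
    (hQalts.trans halts) hab hac hbc (hFQ hb) hv hsbc hsca (hQalts ▸ hballot)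
  have hcQ' := mem_of_margin_pos_of_notMem hF anon neut wpr nits hQ'
    (hQ'alts.trans (hQalts.trans halts)) hab hac hbc
    (by rw [hca, hQmargin c hc a ha]; linarith [hcon a ha hac])
    (by rw [hcb, hQmargin c hc b hb']; linarith [hcon b hb' hbc]) (by simp [hFQ', hab])
  rw [hFQ', mem_singleton] at hcQ'
  exact hbc hcQ'.symm

/-- A voting method on the domain of profiles with two or three alternatives
satisfying anonymity, neutrality, weak positive responsiveness, near immunity
to spoilers, homogeneity, and block preservation is Condorcet consistent on
three-alternative profiles. -/
theorem condorcet_consistency_from_axioms {α : Type*} [DecidableEq α]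
    (hX : ∃ x y z : α, x ≠ y ∧ x ≠ z ∧ y ≠ z)
    (F : Profile α → Finset α)
    (hF : ∀ P ∈ Dom23 α, (F P).Nonempty ∧ F P ⊆ P.alts)
    (anon : Anonymity (Dom23 α) F)
    (neut : Neutrality (Dom23 α) F)
    (wpr : WeakPositiveResponsiveness (Dom23 α) F)
    (nits : NearImmunityToSpoilers (Dom23 α) F)
    (hom : Homogeneity (Dom23 α) F)
    (bp : BlockPreservation (Dom23 α) F) :
    ∀ P ∈ Dom23 α, P.alts.card = 3 →
      ∀ c ∈ P.alts, (∀ x ∈ P.alts, x ≠ c → 0 < Margin P c x) →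
        F P = {c} :=
  condorcet_consistency_from_axioms_general F hF anon neut wpr nits hom bp

end ThreeAlternatives

end MayMinimax
end

section
/- The Minimax MB voting method, defined on all profiles with at least two alternatives, satisfies positive responsiveness: if a ∈ MinimaxMB(P) and P' is obtained from P by one voter improving a's position in their ballot while nothing else changes (there is some b ∈ X(P) with b ≠ a such that either (a,b) ∉ P(i) and (a,b) ∈ P'(i), or (b,a) ∈ P(i) and (b,a) ∉ P'(i); for all c ∈ X(P)\{a}, (a,c) ∈ P(i) implies (a,c) ∈ P'(i) and (c,a) ∉ P(i) implies (c,a) ∉ P'(i); for all c,d ∈ X(P)\{a}, (c,d) ∈ P(i) iff (c,d) ∈ P'(i); all other voters unchanged), then MinimaxMB(P') = {a}. -/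
/-!
Improving `a` in one ballot can only raise the margins of `a` over the other alternatives,
strictly for at least one of them, and leaves every margin between two other alternatives
unchanged. Hence the Minimax score of `a` can only drop while every other score can only
rise: `a` stays a Minimax winner, and every other Minimax winner of `P'` was one of `P`.
The marginal Borda score of `a` strictly rises while every other one can only fall, so in
`P'` the alternative `a` strictly beats every other Minimax winner on marginal Borda score.
-/

theorem Finset.card_filter_lt_card_filter_of_imp {ι : Type*} {s : Finset ι} {p q : ι → Prop}
    [DecidablePred p] [DecidablePred q] (h : ∀ j ∈ s, p j → q j) {i : ι} (hi : i ∈ s)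
    (hp : ¬p i) (hq : q i) :
    (s.filter p).card < (s.filter q).card := by
  refine card_lt_card ((ssubset_iff_of_subset (monotone_filter_right s h)).2 ⟨i, ?_, ?_⟩)
  · exact mem_filter.2 ⟨hi, hq⟩
  · exact fun hi' => hp (mem_filter.1 hi').2

namespace MayMinimax

variable {α : Type*}

theorem margin_swap (P : Profile α) (a b : α) : Margin P b a = -Margin P a b := by
  simp [Margin]

theorem margin_self (P : Profile α) (a : α) : Margin P a a = 0 := by
  simp [Margin]

section MarginComparison

variable {P Q : Profile α} {a c : α}

theorem margin_le_margin (hV : Q.voters = P.voters)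
    (hac : ∀ j ∈ P.voters, P.rel j a c = true → Q.rel j a c = true)
    (hca : ∀ j ∈ P.voters, Q.rel j c a = true → P.rel j c a = true) :
    Margin P a c ≤ Margin Q a c := by
  have hfor := Finset.card_le_card (Finset.monotone_filter_right _ hac)
  have hagainst := Finset.card_le_card (Finset.monotone_filter_right _ hca)
  unfold Margin
  rw [hV]
  omega

theorem margin_lt_margin (hV : Q.voters = P.voters)
    (hac : ∀ j ∈ P.voters, P.rel j a c = true → Q.rel j a c = true)
    (hca : ∀ j ∈ P.voters, Q.rel j c a = true → P.rel j c a = true)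
    {i : ℕ} (hi : i ∈ P.voters)
    (hgain : (P.rel i a c = false ∧ Q.rel i a c = true) ∨
      (P.rel i c a = true ∧ Q.rel i c a = false)) :
    Margin P a c < Margin Q a c := by
  unfold Margin
  rw [hV]
  rcases hgain with ⟨hP, hQ⟩ | ⟨hP, hQ⟩
  · have hfor := Finset.card_filter_lt_card_filter_of_imp hac hi (by simp [hP]) hQ
    have hagainst := Finset.card_le_card (Finset.monotone_filter_right _ hca)
    omega
  · have hfor := Finset.card_le_card (Finset.monotone_filter_right _ hac)
    have hagainst := Finset.card_filter_lt_card_filter_of_imp hca hi (by simp [hQ]) hP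
    omega

end MarginComparison

theorem mmScore_le_mmScore [DecidableEq α] {P Q : Profile α} {x : α} (halts : P.alts = Q.alts)
    (h : ∀ b ∈ P.alts.erase x, Margin P b x ≤ Margin Q b x) :
    MMScore P x ≤ MMScore Q x := by
  unfold MMScore
  rw [← halts]
  rcases (P.alts.erase x).eq_empty_or_nonempty with hempty | hne
  · simp [hempty]
  refine WithBot.unbotD_mono (Finset.max_eq_bot.not.2 (hne.image _).ne_empty) (Finset.max_le ?_)
  simp only [Finset.mem_image]
  rintro _ ⟨b, hb, rfl⟩
  exact (WithBot.coe_le_coe.2 (h b hb)).trans (Finset.le_max (Finset.mem_image_of_mem _ hb))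

namespace ImproveFor

variable {P P' : Profile α} {a : α}

theorem rel_for_of_ne (h : ImproveFor P P' a) (ha : a ∈ P.alts) {c : α} (hc : c ∈ P.alts)
    (hca : c ≠ a) : ∀ j ∈ P.voters, P.rel j a c = true → P'.rel j a c = true := by
  obtain ⟨-, -, i, -, -, hmono, -, hothers⟩ := h
  intro j hj hrel
  by_cases hji : j = i
  · subst hji; exact (hmono c hc hca).1 hrel
  · rwa [hothers j hj hji a ha c hc]

theorem rel_against_of_ne (h : ImproveFor P P' a) (ha : a ∈ P.alts) {c : α} (hc : c ∈ P.alts)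
    (hca : c ≠ a) : ∀ j ∈ P.voters, P'.rel j c a = true → P.rel j c a = true := by
  obtain ⟨-, -, i, -, -, hmono, -, hothers⟩ := h
  intro j hj hrel
  by_cases hji : j = i
  · subst hji
    cases hP : P.rel j c a
    · simp [(hmono c hc hca).2 hP] at hrel
    · rfl
  · rwa [hothers j hj hji c hc a ha] at hrel

theorem rel_eq_of_ne (h : ImproveFor P P' a) {c d : α} (hc : c ∈ P.alts) (hca : c ≠ a)
    (hd : d ∈ P.alts) (hda : d ≠ a) : ∀ j ∈ P.voters, P'.rel j c d = P.rel j c d := by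
  obtain ⟨-, -, i, -, -, -, hfix, hothers⟩ := h
  intro j hj
  by_cases hji : j = i
  · subst hji; exact hfix c hc hca d hd hda
  · exact hothers j hj hji c hc d hd

theorem margin_le (h : ImproveFor P P' a) (ha : a ∈ P.alts) {c : α} (hc : c ∈ P.alts) :
    Margin P a c ≤ Margin P' a c := by
  rcases eq_or_ne c a with rfl | hca
  · rw [margin_self, margin_self]
  · exact margin_le_margin h.1 (h.rel_for_of_ne ha hc hca) (h.rel_against_of_ne ha hc hca)

theorem margin_eq_of_ne (h : ImproveFor P P' a) {c d : α} (hc : c ∈ P.alts) (hca : c ≠ a)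
    (hd : d ∈ P.alts) (hda : d ≠ a) : Margin P' c d = Margin P c d := by
  have hcd := Finset.filter_congr (s := P.voters) (p := fun j => P'.rel j c d = true)
    (q := fun j => P.rel j c d = true) fun j hj => by rw [h.rel_eq_of_ne hc hca hd hda j hj]
  have hdc := Finset.filter_congr (s := P.voters) (p := fun j => P'.rel j d c = true)
    (q := fun j => P.rel j d c = true) fun j hj => by rw [h.rel_eq_of_ne hd hda hc hca j hj]
  unfold Margin
  rw [h.1, hcd, hdc]

theorem exists_margin_lt (h : ImproveFor P P' a) (ha : a ∈ P.alts) :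
    ∃ b ∈ P.alts, Margin P a b < Margin P' a b := by
  obtain ⟨hV, -, i, hi, ⟨b, hb, hba, hgain⟩, -⟩ := id h
  exact ⟨b, hb, margin_lt_margin hV (h.rel_for_of_ne ha hb hba)
    (h.rel_against_of_ne ha hb hba) hi hgain⟩

theorem marginalBorda_lt (h : ImproveFor P P' a) (ha : a ∈ P.alts) :
    MarginalBorda P a < MarginalBorda P' a := by
  unfold MarginalBorda
  rw [h.2.1]
  exact Finset.sum_lt_sum (fun c hc => h.margin_le ha hc) (h.exists_margin_lt ha)

theorem marginalBorda_le_of_ne (h : ImproveFor P P' a) (ha : a ∈ P.alts) {x : α}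
    (hx : x ∈ P.alts) (hxa : x ≠ a) : MarginalBorda P' x ≤ MarginalBorda P x := by
  unfold MarginalBorda
  rw [h.2.1]
  refine Finset.sum_le_sum fun c hc => ?_
  rcases eq_or_ne c a with rfl | hca
  · rw [margin_swap P' c x, margin_swap P c x, neg_le_neg_iff]
    exact h.margin_le ha hx
  · exact (h.margin_eq_of_ne hx hxa hc hca).le

variable [DecidableEq α]

theorem mmScore_le_self (h : ImproveFor P P' a) (ha : a ∈ P.alts) :
    MMScore P' a ≤ MMScore P a :=
  mmScore_le_mmScore h.2.1 fun b hb => by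
    rw [margin_swap P' a b, margin_swap P a b, neg_le_neg_iff]
    exact h.margin_le ha (Finset.mem_of_mem_erase (h.2.1 ▸ hb))

theorem mmScore_le_of_ne (h : ImproveFor P P' a) (ha : a ∈ P.alts) {x : α} (hx : x ∈ P.alts)
    (hxa : x ≠ a) : MMScore P x ≤ MMScore P' x :=
  mmScore_le_mmScore h.2.1.symm fun b hb => by
    rcases eq_or_ne b a with rfl | hba
    · exact h.margin_le ha hx
    · exact (h.margin_eq_of_ne (Finset.mem_of_mem_erase hb) hba hx hxa).ge

theorem mem_minimax (h : ImproveFor P P' a) (ha : a ∈ Minimax P) : a ∈ Minimax P' := by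
  obtain ⟨haX, hmin⟩ := Finset.mem_filter.1 ha
  refine Finset.mem_filter.2 ⟨h.2.1 ▸ haX, fun x hx => ?_⟩
  rw [h.2.1] at hx
  rcases eq_or_ne x a with rfl | hxa
  · rfl
  · exact (h.mmScore_le_self haX).trans ((hmin x hx).trans (h.mmScore_le_of_ne haX hx hxa))

theorem mem_minimax_of_ne (h : ImproveFor P P' a) (ha : a ∈ Minimax P) {x : α}
    (hx : x ∈ Minimax P') (hxa : x ≠ a) : x ∈ Minimax P := by
  obtain ⟨haX, hmin⟩ := Finset.mem_filter.1 ha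
  obtain ⟨hxX, hxmin⟩ := Finset.mem_filter.1 hx
  rw [h.2.1] at hxX
  refine Finset.mem_filter.2 ⟨hxX, fun y hy => ?_⟩
  calc MMScore P x ≤ MMScore P' x := h.mmScore_le_of_ne haX hxX hxa
    _ ≤ MMScore P' a := hxmin a (h.2.1 ▸ haX)
    _ ≤ MMScore P a := h.mmScore_le_self haX
    _ ≤ MMScore P y := hmin y hy

end ImproveFor

theorem minimaxMB_eq_singleton [DecidableEq α] {P : Profile α} {a : α} (ha : a ∈ Minimax P)
    (hdom : ∀ x ∈ Minimax P, x ≠ a → MarginalBorda P x < MarginalBorda P a) :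
    MinimaxMB P = {a} := by
  ext x
  simp only [MinimaxMB, Finset.mem_filter, Finset.mem_singleton]
  constructor
  · rintro ⟨hx, hxmax⟩
    by_contra hxa
    exact (hdom x hx hxa).not_ge (hxmax a ha)
  · rintro rfl
    refine ⟨ha, fun y hy => ?_⟩
    rcases eq_or_ne y x with rfl | hyx
    · rfl
    · exact (hdom y hy hyx).le

theorem minimaxMB_positive_responsiveness_general {α : Type*} [DecidableEq α] :
    ∀ P P' : Profile α, P.voters.Nonempty → 2 ≤ P.alts.card →
      ∀ a ∈ MinimaxMB P, ImproveFor P P' a → MinimaxMB P' = {a} := by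
  intro P P' _ _ a haMB h
  obtain ⟨haMM, hBorda⟩ := Finset.mem_filter.1 haMB
  have ha : a ∈ P.alts := (Finset.mem_filter.1 haMM).1
  refine minimaxMB_eq_singleton (h.mem_minimax haMM) fun x hx hxa => ?_
  have hxMM := h.mem_minimax_of_ne haMM hx hxa
  calc MarginalBorda P' x ≤ MarginalBorda P x :=
        h.marginalBorda_le_of_ne ha (Finset.mem_filter.1 hxMM).1 hxa
    _ ≤ MarginalBorda P a := hBorda x hxMM
    _ < MarginalBorda P' a := h.marginalBorda_lt ha

/-- Minimax MB, on the domain of all profiles (of arbitrary binary relations)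
with at least two alternatives, satisfies (full) positive responsiveness. -/
theorem minimaxMB_positive_responsiveness {α : Type*} [DecidableEq α]
    (hX : ∃ x y z : α, x ≠ y ∧ x ≠ z ∧ y ≠ z) :
    ∀ P P' : Profile α, P.voters.Nonempty → 2 ≤ P.alts.card →
      ∀ a ∈ MinimaxMB P, ImproveFor P P' a → MinimaxMB P' = {a} :=
  minimaxMB_positive_responsiveness_general

end MayMinimax
end
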